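/- arXiv:2504.00693 — 2 statements merged into one kernel-verified Lean document; each statement's English description precedes it below -/
import Mathlib

section
/- Let v, s ∈ [0,1] and q ∈ (0,1] with v ≤ D/|F| where D/|F| ∈ [0,1]. Set w = v + (1−v)/|F|. Then w ≤ (D+1)/|F| − D/|F|², and w ≥ 1/|F|. Moreover if s ≥ (1−A)^{i−1} with A = (D+1)/|F| − D/|F|², then 1 − ((1−s) + s·w) ≥ (1−A)^i. -/
/-- Key inductive inequality in the soundness proof of Fold-DCS: with
`w = v + (1−v)/|F|` and `A = (D+1)/|F| − D/|F|²`, one has `w ≤ A`, `w ≥ 1/|F|`,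
and if `s ≥ (1−A)^{i−1}` then `1 − ((1−s) + s·w) ≥ (1−A)^i`. -/
theorem foldDCS_inductive_inequality (Fc D v s : ℝ) (i : ℕ)
    (hFc : 1 ≤ Fc) (hD : 0 ≤ D)
    (hv0 : 0 ≤ v) (hv : v ≤ D / Fc) (hDF : D / Fc ≤ 1)
    (hs0 : 0 ≤ s) (hs1 : s ≤ 1) (hi : 1 ≤ i) :
    v + (1 - v) / Fc ≤ (D + 1) / Fc - D / Fc ^ 2 ∧
    1 / Fc ≤ v + (1 - v) / Fc ∧
    ((1 - ((D + 1) / Fc - D / Fc ^ 2)) ^ (i - 1) ≤ s →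
      (1 - ((D + 1) / Fc - D / Fc ^ 2)) ^ i
        ≤ 1 - ((1 - s) + s * (v + (1 - v) / Fc))) := by
  have hF0 : (0:ℝ) < Fc := lt_of_lt_of_le one_pos hFc
  have hinv : 1 / Fc ≤ 1 := by
    rw [div_le_one hF0]; exact hFc
  have hinv0 : 0 ≤ 1 / Fc := by positivity
  -- rewrite w and A
  have hw : v + (1 - v) / Fc = v * (1 - 1/Fc) + 1/Fc := by field_simp; ring
  have hA : (D + 1) / Fc - D / Fc ^ 2 = (D / Fc) * (1 - 1/Fc) + 1/Fc := by
    field_simp; ring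
  have hfac : 0 ≤ 1 - 1/Fc := by linarith
  have hwA : v + (1 - v) / Fc ≤ (D + 1) / Fc - D / Fc ^ 2 := by
    rw [hw, hA]
    have := mul_le_mul_of_nonneg_right hv hfac
    linarith
  have hw1 : 1 / Fc ≤ v + (1 - v) / Fc := by
    rw [hw]
    nlinarith
  have hA1 : (D + 1) / Fc - D / Fc ^ 2 ≤ 1 := by
    rw [hA]
    nlinarith [mul_le_mul_of_nonneg_right hDF hfac]
  refine ⟨hwA, hw1, fun hs => ?_⟩
  set A := (D + 1) / Fc - D / Fc ^ 2 with hAdef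
  clear_value A
  have h1A : 0 ≤ 1 - A := by linarith
  have key : (1 - A) ^ i = (1 - A) ^ (i - 1) * (1 - A) := by
    conv_lhs => rw [show i = (i - 1) + 1 from (Nat.succ_pred_eq_of_pos hi).symm]
    ring
  rw [key]
  have hstep : (1 - A) ^ (i - 1) * (1 - A) ≤ s * (1 - A) :=
    mul_le_mul_of_nonneg_right hs h1A
  have h2 : s * (v + (1 - v) / Fc) ≤ s * A := mul_le_mul_of_nonneg_left hwA hs0
  have h3 : s * (1 - A) = s - s * A := by ring
  linarith
end

section
/- (Correctness of the unrolled folded polynomial.) Let f⁽⁰⁾ = f be a polynomial, and for i = 1,…,m let g_i be any polynomial (in fewer variables), and define f⁽ⁱ⁾ = z⁽ⁱ⁾·g_i + f⁽ⁱ⁻¹⁾(α⁽ⁱ⁾, ·), where α⁽ⁱ⁾ substitutes the first half of the remaining variables. Then f⁽ᵐ⁾(x) = f(α⁽¹⁾,…,α⁽ᵐ⁾, x) + Σ_{j=1}^m z⁽ʲ⁾ · g_j(α⁽ʲ⁺¹⁾,…,α⁽ᵐ⁾, x). (Consistency check formula used by the Fold-DCS verifier.) -/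
/-! Each level substitutes the point `α` for a longer prefix of the variables than the previous
one, so the last substitution absorbs all earlier ones. Applying it to the recursion therefore
telescopes, and `f⁽ᵐ⁾` is itself fixed by the last substitution (as is `g_m`). -/

open MvPolynomial

noncomputable def substPrefix {F : Type*} [CommSemiring F] {n : ℕ} (α : Fin n → F) (t : ℕ) :
    MvPolynomial (Fin n) F →ₐ[F] MvPolynomial (Fin n) F :=
  aeval fun k => if (k : ℕ) < t then C (α k) else X k

section substPrefix

variable {F : Type*} [CommSemiring F] {n : ℕ} (α : Fin n → F)

theorem substPrefix_zero : substPrefix α 0 = AlgHom.id F (MvPolynomial (Fin n) F) := by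
  ext k
  simp [substPrefix]

theorem substPrefix_comp_of_le {s t : ℕ} (hst : s ≤ t) :
    (substPrefix α t).comp (substPrefix α s) = substPrefix α t := by
  ext k
  by_cases hs : (k : ℕ) < s
  · simp [substPrefix, hs, hs.trans_le hst]
  · simp [substPrefix, hs]

end substPrefix

theorem map_fold_eq_add_sum {R M : Type*} [CommSemiring R] [AddCommMonoid M] [Module R M]
    (φ : ℕ → M →ₗ[R] M) (z : ℕ → R) (g x : ℕ → M) {m : ℕ}
    (habsorb : ∀ i ≤ m, φ m ∘ₗ φ i = φ m)
    (hrec : ∀ i, 1 ≤ i → i ≤ m → x i = z i • g i + φ i (x (i - 1))) :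
    ∀ i ≤ m, φ m (x i) = φ m (x 0) + ∑ j ∈ Finset.Icc 1 i, z j • φ m (g j) := by
  intro i hi
  induction i with
  | zero => simp
  | succ i ih =>
    have hφ : φ m (φ (i + 1) (x i)) = φ m (x i) :=
      LinearMap.congr_fun (habsorb (i + 1) hi) (x i)
    rw [hrec (i + 1) i.succ_pos hi, Nat.add_sub_cancel, map_add, map_smul, hφ, ih (by omega),
      Finset.sum_Icc_succ_top (by omega)]
    abel

/-- Correctness of the unrolled folded polynomial in Fold-DCS. All polynomials live in
`μ = 2^m` variables; the `i`-th level polynomials only involve the last `2^{m−i}`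
variables, and `subst i` substitutes the global random point `α` for all earlier
variables. If `f⁽ⁱ⁾ = z⁽ⁱ⁾·g_i + f⁽ⁱ⁻¹⁾(α⁽ⁱ⁾, ·)`, then
`f⁽ᵐ⁾ = f(α⁽¹⁾,…,α⁽ᵐ⁾, ·) + Σ_{j=1}^m z⁽ʲ⁾·g_j(α⁽ʲ⁺¹⁾,…,α⁽ᵐ⁾, ·)`. -/
theorem foldDCS_unrolled_fold {F : Type*} [CommRing F] (m μ : ℕ) (hμ : μ = 2 ^ m)
    (f : MvPolynomial (Fin μ) F) (α : Fin μ → F) (z : ℕ → F)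
    (g : ℕ → MvPolynomial (Fin μ) F)
    (subst : ℕ → MvPolynomial (Fin μ) F → MvPolynomial (Fin μ) F)
    (hsubst : ∀ i p, subst i p =
      MvPolynomial.aeval (fun k : Fin μ =>
        if (k : ℕ) < μ - 2 ^ (m - i) then MvPolynomial.C (α k) else MvPolynomial.X k) p)
    (hg : ∀ j : ℕ, 1 ≤ j → j ≤ m → subst j (g j) = g j)
    (fseq : ℕ → MvPolynomial (Fin μ) F) (h0 : fseq 0 = f)
    (hrec : ∀ i : ℕ, 1 ≤ i → i ≤ m → fseq i = z i • g i + subst i (fseq (i - 1))) :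
    fseq m = subst m f + ∑ j ∈ Finset.Icc 1 m, z j • subst m (g j) := by
  set φ : ℕ → MvPolynomial (Fin μ) F →ₗ[F] MvPolynomial (Fin μ) F :=
    fun i => (substPrefix α (μ - 2 ^ (m - i))).toLinearMap
  have hφ : ∀ i p, subst i p = φ i p := hsubst
  have habsorb : ∀ i ≤ m, φ m ∘ₗ φ i = φ m := fun i _ => by
    have hle : μ - 2 ^ (m - i) ≤ μ - 2 ^ (m - m) :=
      Nat.sub_le_sub_left (by simpa using Nat.one_le_two_pow) μ
    simp only [φ, ← AlgHom.comp_toLinearMap, substPrefix_comp_of_le α hle]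
  have hfixed : φ m (fseq m) = fseq m := by
    rcases m with _ | n
    · -- `μ = 1`, so no variable is substituted
      simp [φ, hμ, substPrefix_zero]
    · rw [hrec (n + 1) n.succ_pos le_rfl, hφ (n + 1) (fseq _), map_add, map_smul,
        ← hφ (n + 1) (g _), hg (n + 1) n.succ_pos le_rfl, ← LinearMap.comp_apply, habsorb _ le_rfl]
  rw [← hfixed, map_fold_eq_add_sum φ z g fseq habsorb (by simpa only [hφ] using hrec) m le_rfl, h0]
  simp only [hφ]
end
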